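/- The set of finite branches that are not refutable in the tableau calculus T forms an abstract consistency class; consequently every unsatisfiable finite branch is refutable (completeness of the cut-free tableau calculus for STT). -/

import Mathlib

/-- Simple types of STT: the type `o` of truth values is `base 0`, sorts are `base (α+1)`. -/
inductive Ty : Type
  | base : ℕ → Ty
  | arr : Ty → Ty → Ty
  deriving DecidableEq

abbrev Ty.o : Ty := Ty.base 0
abbrev Ty.sort (α : ℕ) : Ty := Ty.base (α + 1)

/-- Terms of STT: variables, negation, primitive equality at every type, application,
lambda abstraction. -/
inductive Tm : Ty → Type
  | var : ℕ → (σ : Ty) → Tm σ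
  | neg : Tm (Ty.arr Ty.o Ty.o)
  | eq : (σ : Ty) → Tm (Ty.arr σ (Ty.arr σ Ty.o))
  | app : ∀ {σ τ : Ty}, Tm (Ty.arr σ τ) → Tm σ → Tm τ
  | lam : ℕ → (σ : Ty) → ∀ {τ : Ty}, Tm τ → Tm (Ty.arr σ τ)

def Tm.Not (s : Tm Ty.o) : Tm Ty.o := Tm.app Tm.neg s
def Tm.Eqn {σ : Ty} (s t : Tm σ) : Tm Ty.o := Tm.app (Tm.app (Tm.eq σ) s) t
def Tm.Diseq {σ : Ty} (s t : Tm σ) : Tm Ty.o := Tm.Not (Tm.Eqn s t)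

/-- Argument lists (spines): `Args σ ρ` turns a head of type `σ` into a term of type `ρ`. -/
inductive Args : Ty → Ty → Type
  | nil : ∀ {ρ}, Args ρ ρ
  | cons : ∀ {σ τ ρ}, Tm σ → Args τ ρ → Args (Ty.arr σ τ) ρ

def applyArgs : ∀ {σ ρ : Ty}, Tm σ → Args σ ρ → Tm ρ
  | _, _, s, Args.nil => s
  | _, _, s, Args.cons t a => applyArgs (Tm.app s t) a

def nfArgs (f : (σ : Ty) → Tm σ → Tm σ) : ∀ {σ ρ : Ty}, Args σ ρ → Args σ ρ
  | _, _, Args.nil => Args.nil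
  | _, _, Args.cons t a => Args.cons (f _ t) (nfArgs f a)

/-- Pairs of equi-typed argument lists `s₁ … sₙ` and `t₁ … tₙ`. -/
inductive Args2 : Ty → Ty → Type
  | nil : ∀ {ρ}, Args2 ρ ρ
  | cons : ∀ {σ τ ρ}, Tm σ → Tm σ → Args2 τ ρ → Args2 (Ty.arr σ τ) ρ

def Args2.left : ∀ {σ ρ}, Args2 σ ρ → Args σ ρ
  | _, _, Args2.nil => Args.nil
  | _, _, Args2.cons s _ p => Args.cons s (Args2.left p)

def Args2.right : ∀ {σ ρ}, Args2 σ ρ → Args σ ρ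
  | _, _, Args2.nil => Args.nil
  | _, _, Args2.cons _ t p => Args.cons t (Args2.right p)

/-- The list of disequations `sᵢ ≠ tᵢ` of a pair of argument lists. -/
def Args2.diseqs : ∀ {σ ρ}, Args2 σ ρ → List (Tm Ty.o)
  | _, _, Args2.nil => []
  | _, _, Args2.cons s t p => Tm.Diseq s t :: Args2.diseqs p

/-- Atomic heads: names (variables and the logical constants). -/
inductive Atomic : ∀ {σ : Ty}, Tm σ → Prop
  | var : ∀ n σ, Atomic (Tm.var n σ)
  | neg : Atomic Tm.neg
  | eq : ∀ σ, Atomic (Tm.eq σ)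

/-- Update a substitution at the name `(x, σ0)`. -/
def updS (θ : ℕ → (σ : Ty) → Option (Tm σ)) (x : ℕ) (σ0 : Ty) (t : Tm σ0) :
    ℕ → (σ : Ty) → Option (Tm σ) := fun n σ =>
  if h : n = x ∧ σ = σ0 then some (h.2.symm ▸ t) else θ n σ

/-- A normalization operator with an accompanying substitution operation,
satisfying N1–N3 and S1–S4. -/
structure NormOp : Type where
  nf : ∀ {σ : Ty}, Tm σ → Tm σ
  sub : (ℕ → (σ : Ty) → Option (Tm σ)) → ∀ {σ : Ty}, Tm σ → Tm σ
  n1 : ∀ {σ : Ty} (s : Tm σ), nf (nf s) = nf s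
  n2 : ∀ {σ τ : Ty} (s : Tm (Ty.arr σ τ)) (t : Tm σ), nf (Tm.app (nf s) t) = nf (Tm.app s t)
  n3 : ∀ {σ : Ty} {β : ℕ} (h : Tm σ), Atomic h → ∀ a : Args σ (Ty.base β),
      nf (applyArgs h a) = applyArgs h (nfArgs (fun _ s => nf s) a)
  s1 : ∀ θ (n : ℕ) (σ : Ty), sub θ (Tm.var n σ) = (θ n σ).getD (Tm.var n σ)
  s1neg : ∀ θ, sub θ Tm.neg = Tm.neg
  s1eq : ∀ θ (σ : Ty), sub θ (Tm.eq σ) = Tm.eq σ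
  s2 : ∀ θ {σ τ : Ty} (s : Tm (Ty.arr σ τ)) (t : Tm σ),
      sub θ (Tm.app s t) = Tm.app (sub θ s) (sub θ t)
  s3 : ∀ θ (x : ℕ) (σ : Ty) {τ : Ty} (s : Tm τ) (t : Tm σ),
      nf (Tm.app (sub θ (Tm.lam x σ s)) t) = nf (sub (updS θ x σ t) s)
  s4 : ∀ {σ : Ty} (s : Tm σ), nf (sub (fun _ _ => none) s) = nf s

/-- The evidence conditions for a branch `E`. -/
structure Evident (Ω : NormOp) (E : Set (Tm Ty.o)) : Prop where
  dn : ∀ s : Tm Ty.o, Tm.Not (Tm.Not s) ∈ E → s ∈ E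
  bq : ∀ s t : Tm Ty.o, Tm.Eqn s t ∈ E → (s ∈ E ∧ t ∈ E) ∨ (Tm.Not s ∈ E ∧ Tm.Not t ∈ E)
  be : ∀ s t : Tm Ty.o, Tm.Diseq s t ∈ E → (s ∈ E ∧ Tm.Not t ∈ E) ∨ (Tm.Not s ∈ E ∧ t ∈ E)
  fq : ∀ {σ τ : Ty} (s t : Tm (Ty.arr σ τ)), Tm.Eqn s t ∈ E → ∀ u : Tm σ, Ω.nf u = u →
      Tm.Eqn (Ω.nf (Tm.app s u)) (Ω.nf (Tm.app t u)) ∈ E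
  fe : ∀ {σ τ : Ty} (s t : Tm (Ty.arr σ τ)), Tm.Diseq s t ∈ E →
      ∃ x : ℕ, Tm.Diseq (Ω.nf (Tm.app s (Tm.var x σ))) (Ω.nf (Tm.app t (Tm.var x σ))) ∈ E
  mat : ∀ {σ : Ty} (x : ℕ) (p : Args2 σ Ty.o),
      applyArgs (Tm.var x σ) p.left ∈ E → Tm.Not (applyArgs (Tm.var x σ) p.right) ∈ E →
      ∃ d ∈ p.diseqs, d ∈ E
  dec : ∀ {σ : Ty} {α : ℕ} (x : ℕ) (p : Args2 σ (Ty.sort α)),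
      Tm.Diseq (applyArgs (Tm.var x σ) p.left) (applyArgs (Tm.var x σ) p.right) ∈ E →
      ∃ d ∈ p.diseqs, d ∈ E
  con : ∀ {α : ℕ} (s t u v : Tm (Ty.sort α)), Tm.Eqn s t ∈ E → Tm.Diseq u v ∈ E →
      (Tm.Diseq s u ∈ E ∧ Tm.Diseq t u ∈ E) ∨ (Tm.Diseq s v ∈ E ∧ Tm.Diseq t v ∈ E)

/-- A term `u` is discriminating in `E` if it occurs on one side of a disequation in `E`. -/
def Discriminating (E : Set (Tm Ty.o)) {σ : Ty} (u : Tm σ) : Prop :=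
  ∃ t : Tm σ, Tm.Diseq u t ∈ E ∨ Tm.Diseq t u ∈ E

/-- An `α`-discriminant: a maximal set of `α`-discriminating terms no two of which are
related by a disequation in `E`. -/
def IsDiscriminant (E : Set (Tm Ty.o)) (α : ℕ) (a : Set (Tm (Ty.sort α))) : Prop :=
  (∀ u ∈ a, Discriminating E u) ∧
  (∀ s ∈ a, ∀ t ∈ a, Tm.Diseq s t ∉ E) ∧
  (∀ b : Set (Tm (Ty.sort α)), a ⊆ b → (∀ u ∈ b, Discriminating E u) →
    (∀ s ∈ b, ∀ t ∈ b, Tm.Diseq s t ∉ E) → b = a)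

/-- `s # t`: the disequation `s ≠ t` or `t ≠ s` belongs to `E`. -/
def hashE (E : Set (Tm Ty.o)) {σ : Ty} (s t : Tm σ) : Prop :=
  Tm.Diseq s t ∈ E ∨ Tm.Diseq t s ∈ E

/-- Compatibility of two terms relative to an evident branch, by induction on types. -/
def compat (Ω : NormOp) (E : Set (Tm Ty.o)) : (σ : Ty) → Tm σ → Tm σ → Prop
  | Ty.base 0 => fun s t =>
      ¬(Ω.nf s ∈ E ∧ Tm.Not (Ω.nf t) ∈ E) ∧ ¬(Tm.Not (Ω.nf s) ∈ E ∧ Ω.nf t ∈ E)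
  | Ty.base (α + 1) => fun s t => ¬ hashE E (Ω.nf s) (Ω.nf t)
  | Ty.arr σ τ => fun s t => ∀ u v : Tm σ, compat Ω E σ u v →
      compat Ω E τ (Tm.app s u) (Tm.app t v)

/-- `ExistsPairHashNf Ω E p` holds if `[sᵢ] # [tᵢ]` for some position `i` of `p`. -/
def ExistsPairHashNf (Ω : NormOp) (E : Set (Tm Ty.o)) : ∀ {σ ρ : Ty}, Args2 σ ρ → Prop
  | _, _, Args2.nil => False
  | _, _, Args2.cons s t p => hashE E (Ω.nf s) (Ω.nf t) ∨ ExistsPairHashNf Ω E p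

/-- The value system of an evident branch `E`: at `o` the values are booleans, at a sort the
values are `α`-discriminants, and at function types the logical-relation clause is used. -/
def sem (Ω : NormOp) (E : Set (Tm Ty.o)) : (σ : Ty) → (A : Type) × (Tm σ → A → Prop)
  | Ty.base 0 => ⟨Bool, fun s b => if b then Tm.Not (Ω.nf s) ∉ E else Ω.nf s ∉ E⟩
  | Ty.base (α + 1) => ⟨Set (Tm (Ty.sort α)), fun s a =>
      IsDiscriminant E α a ∧ (Discriminating E (Ω.nf s) → Ω.nf s ∈ a)⟩
  | Ty.arr σ τ =>
      ⟨{x : (sem Ω E σ).1 // ∃ t : Tm σ, (sem Ω E σ).2 t x} → (sem Ω E τ).1,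
       fun s f => ∀ (t : Tm σ) (x : (sem Ω E σ).1) (h : (sem Ω E σ).2 t x),
         (sem Ω E τ).2 (Tm.app s t) (f ⟨x, t, h⟩)⟩

/-- An applicative structure for STT: nonempty domains, `D(στ)` a set of functions
`D(σ) → D(τ)` (extensionality), `D(o) = {0,1}`, together with an assignment for the
variables and logical values for `¬` and `=_σ`. -/
structure Struc : Type 1 where
  D : Ty → Type
  ap : ∀ {σ τ : Ty}, D (Ty.arr σ τ) → D σ → D τ
  ext : ∀ {σ τ : Ty} (f g : D (Ty.arr σ τ)), (∀ a : D σ, ap f a = ap g a) → f = g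
  ne : ∀ σ : Ty, Nonempty (D σ)
  I : ℕ → ∀ σ : Ty, D σ
  bo : D Ty.o ≃ Bool
  negv : D (Ty.arr Ty.o Ty.o)
  eqv : ∀ σ : Ty, D (Ty.arr σ (Ty.arr σ Ty.o))
  hneg : ∀ b : D Ty.o, ap negv b = bo.symm (!(bo b))
  heq : ∀ {σ : Ty} (a b : D σ), ap (ap (eqv σ) a) b = bo.symm true ↔ a = b

/-- Update the assignment of a structure at the name `(m, σ0)`. -/
def updD (M : Struc) (I : ℕ → ∀ σ, M.D σ) (m : ℕ) (σ0 : Ty) (a : M.D σ0) :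
    ℕ → ∀ σ, M.D σ := fun n σ =>
  if h : n = m ∧ σ = σ0 then (h.2.symm ▸ a) else I n σ

/-- The evaluation relation of a logical structure. -/
inductive Eval (M : Struc) : (ℕ → ∀ σ, M.D σ) → ∀ σ : Ty, Tm σ → M.D σ → Prop
  | var : ∀ (I : ℕ → ∀ σ, M.D σ) (n : ℕ) (σ : Ty), Eval M I σ (Tm.var n σ) (I n σ)
  | neg : ∀ I : ℕ → ∀ σ, M.D σ, Eval M I (Ty.arr Ty.o Ty.o) Tm.neg M.negv
  | eq : ∀ (I : ℕ → ∀ σ, M.D σ) (σ : Ty), Eval M I (Ty.arr σ (Ty.arr σ Ty.o)) (Tm.eq σ) (M.eqv σ)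
  | app : ∀ {I : ℕ → ∀ σ, M.D σ} {σ τ : Ty} {s : Tm (Ty.arr σ τ)} {t : Tm σ}
      {f : M.D (Ty.arr σ τ)} {a : M.D σ},
      Eval M I (Ty.arr σ τ) s f → Eval M I σ t a → Eval M I τ (Tm.app s t) (M.ap f a)
  | lam : ∀ {I : ℕ → ∀ σ, M.D σ} (n : ℕ) (σ : Ty) {τ : Ty} (s : Tm τ) (f : M.D (Ty.arr σ τ)),
      (∀ a : M.D σ, Eval M (updD M I n σ a) τ s (M.ap f a)) →
      Eval M I (Ty.arr σ τ) (Tm.lam n σ s) f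

/-- A logical interpretation: a logical structure whose evaluation is total. -/
structure Interp : Type 1 extends Struc where
  total : ∀ (σ : Ty) (s : Tm σ), ∃ a : toStruc.D σ, Eval toStruc toStruc.I σ s a

/-- `M` is a model of the set of formulas `E`. -/
def Satisfies (M : Interp) (E : Set (Tm Ty.o)) : Prop :=
  ∀ s ∈ E, Eval M.toStruc M.I Ty.o s (M.bo.symm true)

/-- A surjective interpretation: every value is denoted by some term. -/
def Surj (M : Interp) : Prop :=
  ∀ (σ : Ty) (a : M.D σ), ∃ s : Tm σ, Eval M.toStruc M.I σ s a

/-- A complete branch: contains `s` or `¬s` for every normal formula `s`. -/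
def CompleteBranch (Ω : NormOp) (E : Set (Tm Ty.o)) : Prop :=
  ∀ s : Tm Ty.o, Ω.nf s = s → s ∈ E ∨ Tm.Not s ∈ E

/-- The abstract consistency conditions on a set of branches `Γ`. -/
structure ACC (Ω : NormOp) (Γ : Set (Set (Tm Ty.o))) : Prop where
  dn : ∀ A ∈ Γ, ∀ s : Tm Ty.o, Tm.Not (Tm.Not s) ∈ A → insert s A ∈ Γ
  bq : ∀ A ∈ Γ, ∀ s t : Tm Ty.o, Tm.Eqn s t ∈ A →
      insert s (insert t A) ∈ Γ ∨ insert (Tm.Not s) (insert (Tm.Not t) A) ∈ Γ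
  be : ∀ A ∈ Γ, ∀ s t : Tm Ty.o, Tm.Diseq s t ∈ A →
      insert s (insert (Tm.Not t) A) ∈ Γ ∨ insert (Tm.Not s) (insert t A) ∈ Γ
  fq : ∀ A ∈ Γ, ∀ {σ τ : Ty} (s t : Tm (Ty.arr σ τ)), Tm.Eqn s t ∈ A → ∀ u : Tm σ, Ω.nf u = u →
      insert (Tm.Eqn (Ω.nf (Tm.app s u)) (Ω.nf (Tm.app t u))) A ∈ Γ
  fe : ∀ A ∈ Γ, ∀ {σ τ : Ty} (s t : Tm (Ty.arr σ τ)), Tm.Diseq s t ∈ A →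
      ∃ x : ℕ, insert (Tm.Diseq (Ω.nf (Tm.app s (Tm.var x σ))) (Ω.nf (Tm.app t (Tm.var x σ)))) A ∈ Γ
  mat : ∀ A ∈ Γ, ∀ {σ : Ty} (x : ℕ) (p : Args2 σ Ty.o),
      applyArgs (Tm.var x σ) p.left ∈ A → Tm.Not (applyArgs (Tm.var x σ) p.right) ∈ A →
      ∃ d ∈ p.diseqs, insert d A ∈ Γ
  dec : ∀ A ∈ Γ, ∀ {σ : Ty} {α : ℕ} (x : ℕ) (p : Args2 σ (Ty.sort α)),
      Tm.Diseq (applyArgs (Tm.var x σ) p.left) (applyArgs (Tm.var x σ) p.right) ∈ A →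
      ∃ d ∈ p.diseqs, insert d A ∈ Γ
  con : ∀ A ∈ Γ, ∀ {α : ℕ} (s t u v : Tm (Ty.sort α)), Tm.Eqn s t ∈ A → Tm.Diseq u v ∈ A →
      insert (Tm.Diseq s u) (insert (Tm.Diseq t u) A) ∈ Γ ∨
      insert (Tm.Diseq s v) (insert (Tm.Diseq t v) A) ∈ Γ

/-- A complete abstract consistency class. -/
def CompleteACC (Ω : NormOp) (Γ : Set (Set (Tm Ty.o))) : Prop :=
  ∀ A ∈ Γ, ∀ s : Tm Ty.o, Ω.nf s = s → insert s A ∈ Γ ∨ insert (Tm.Not s) A ∈ Γ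

/-- Free occurrence of the name `(x, μ)` in a term. -/
def FreeIn (x : ℕ) (μ : Ty) : ∀ {σ : Ty}, Tm σ → Prop
  | _, Tm.var n σ => x = n ∧ μ = σ
  | _, Tm.app s t => FreeIn x μ s ∨ FreeIn x μ t
  | _, Tm.lam n σ s => ¬(x = n ∧ μ = σ) ∧ FreeIn x μ s
  | _, _ => False

/-- A closed branch: contains `x` and `¬x` for a variable `x : o`, or `x ≠ x` at a sort. -/
def ClosedB (A : Set (Tm Ty.o)) : Prop :=
  (∃ x : ℕ, Tm.var x Ty.o ∈ A ∧ Tm.Not (Tm.var x Ty.o) ∈ A) ∨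
  (∃ (α : ℕ) (x : ℕ), Tm.Diseq (Tm.var x (Ty.sort α)) (Tm.var x (Ty.sort α)) ∈ A)

/-- Refutability in the cut-free tableau calculus `T` for STT, with the restrictions that
rules are applied only to non-closed branches and functional extensionality is applied only
once per disequation. -/
inductive Refutable (Ω : NormOp) : Set (Tm Ty.o) → Prop
  | closed : ∀ {A : Set (Tm Ty.o)}, ClosedB A → Refutable Ω A
  | dn : ∀ {A : Set (Tm Ty.o)} {s : Tm Ty.o}, ¬ClosedB A → Tm.Not (Tm.Not s) ∈ A →
      Refutable Ω (insert s A) → Refutable Ω A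
  | bq : ∀ {A : Set (Tm Ty.o)} (s t : Tm Ty.o), ¬ClosedB A → Tm.Eqn s t ∈ A →
      Refutable Ω (insert s (insert t A)) →
      Refutable Ω (insert (Tm.Not s) (insert (Tm.Not t) A)) → Refutable Ω A
  | be : ∀ {A : Set (Tm Ty.o)} (s t : Tm Ty.o), ¬ClosedB A → Tm.Diseq s t ∈ A →
      Refutable Ω (insert s (insert (Tm.Not t) A)) →
      Refutable Ω (insert (Tm.Not s) (insert t A)) → Refutable Ω A
  | fq : ∀ {A : Set (Tm Ty.o)} {σ τ : Ty} (s t : Tm (Ty.arr σ τ)) (u : Tm σ), ¬ClosedB A →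
      Tm.Eqn s t ∈ A → Ω.nf u = u →
      Refutable Ω (insert (Tm.Eqn (Ω.nf (Tm.app s u)) (Ω.nf (Tm.app t u))) A) → Refutable Ω A
  | fe : ∀ {A : Set (Tm Ty.o)} {σ τ : Ty} (s t : Tm (Ty.arr σ τ)) (x : ℕ), ¬ClosedB A →
      Tm.Diseq s t ∈ A → (∀ u ∈ A, ¬ FreeIn x σ u) →
      (¬∃ y : ℕ, Tm.Diseq (Ω.nf (Tm.app s (Tm.var y σ))) (Ω.nf (Tm.app t (Tm.var y σ))) ∈ A) →
      Refutable Ω (insert (Tm.Diseq (Ω.nf (Tm.app s (Tm.var x σ))) (Ω.nf (Tm.app t (Tm.var x σ)))) A) →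
      Refutable Ω A
  | mat : ∀ {A : Set (Tm Ty.o)} {σ : Ty} (x : ℕ) (p : Args2 σ Ty.o), ¬ClosedB A →
      applyArgs (Tm.var x σ) p.left ∈ A → Tm.Not (applyArgs (Tm.var x σ) p.right) ∈ A →
      (∀ d ∈ p.diseqs, Refutable Ω (insert d A)) → Refutable Ω A
  | dec : ∀ {A : Set (Tm Ty.o)} {σ : Ty} {α : ℕ} (x : ℕ) (p : Args2 σ (Ty.sort α)), ¬ClosedB A →
      Tm.Diseq (applyArgs (Tm.var x σ) p.left) (applyArgs (Tm.var x σ) p.right) ∈ A →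
      (∀ d ∈ p.diseqs, Refutable Ω (insert d A)) → Refutable Ω A
  | con : ∀ {A : Set (Tm Ty.o)} {α : ℕ} (s t u v : Tm (Ty.sort α)), ¬ClosedB A →
      Tm.Eqn s t ∈ A → Tm.Diseq u v ∈ A →
      Refutable Ω (insert (Tm.Diseq s u) (insert (Tm.Diseq t u) A)) →
      Refutable Ω (insert (Tm.Diseq s v) (insert (Tm.Diseq t v) A)) → Refutable Ω A

/-!
If every alternative of an `ACC` clause were refutable, the corresponding tableau rule would
refute the branch itself; hence the finite normal non-refutable branches form an abstract
consistency class, and model existence shows that its members are satisfiable. A fair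
enumeration of the countably many rule instances extends a member to an evident branch `E`.
Over `E` the possible values of a term are booleans at `o`, discriminants (maximal sets of
discriminating terms no two of which are related by a disequation of `E`) at sorts, and
functions respecting possible values at arrow types. A compatibility logical relation shows
that every term has a possible value and that `¬` and `=` receive the intended ones, which
gives an interpretation satisfying `E`.
-/

structure Rule (α : Type*) where
  prem : Set α
  alts : Set (Set α)

namespace Rule

variable {α : Type*}

def Consistent (r : Rule α) (Γ : Set (Set α)) : Prop :=
  ∀ A ∈ Γ, r.prem ⊆ A → ∃ C ∈ r.alts, C ∪ A ∈ Γ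

def Saturated (r : Rule α) (E : Set α) : Prop :=
  r.prem ⊆ E → ∃ C ∈ r.alts, C ⊆ E

lemma Consistent.exists_step {r : Rule α} {Γ : Set (Set α)} (hr : r.Consistent Γ) {A : Set α}
    (hA : A ∈ Γ) : ∃ B ∈ Γ, A ⊆ B ∧ (r.prem ⊆ A → ∃ C ∈ r.alts, C ⊆ B) := by
  by_cases hprem : r.prem ⊆ A
  · obtain ⟨C, hC, hCA⟩ := hr A hA hprem
    exact ⟨C ∪ A, hCA, Set.subset_union_right, fun _ => ⟨C, hC, Set.subset_union_left⟩⟩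
  · exact ⟨A, hA, subset_rfl, fun h => absurd h hprem⟩

theorem exists_saturated_superset {ι : Type*} [Countable ι] {R : ι → Rule α}
    (hfin : ∀ i, (R i).prem.Finite) {Γ : Set (Set α)} (hΓ : ∀ i, (R i).Consistent Γ)
    {A : Set α} (hA : A ∈ Γ) :
    ∃ E, A ⊆ E ∧ (∀ i, (R i).Saturated E) ∧ ∀ f ∈ E, ∃ B ∈ Γ, f ∈ B := by
  rcases isEmpty_or_nonempty ι with hι | hι
  · exact ⟨A, subset_rfl, isEmptyElim, fun f hf => ⟨A, hA, hf⟩⟩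
  obtain ⟨e, he⟩ := exists_surjective_nat ι
  choose step hstepΓ hstep_sup hstep_sat using
    fun (B : {B // B ∈ Γ}) (i : ι) => (hΓ i).exists_step B.2
  -- round `k` treats the rule `e k.unpair.1`, so every rule is treated in infinitely many rounds
  let chain : ℕ → {B // B ∈ Γ} := fun n =>
    Nat.rec ⟨A, hA⟩ (fun k B => ⟨step B (e k.unpair.1), hstepΓ B _⟩) n
  have hmono : Monotone fun n => (chain n).1 :=
    monotone_nat_of_le_succ fun n => hstep_sup (chain n) _
  refine ⟨⋃ n, (chain n).1, Set.subset_iUnion (fun n => (chain n).1) 0, fun i hprem => ?_,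
    fun f hf => ?_⟩
  · obtain ⟨k, hk⟩ := hmono.directed_le.exists_mem_subset_of_finset_subset_biUnion
      (s := (hfin i).toFinset) (by simpa using hprem)
    obtain ⟨j, rfl⟩ := he i
    obtain ⟨C, hC, hCsub⟩ := hstep_sat (chain (Nat.pair j k)) (e j)
      (((hfin _).coe_toFinset ▸ hk).trans (hmono (Nat.right_le_pair j k)))
    refine ⟨C, hC, hCsub.trans fun f hf => Set.mem_iUnion.2 ⟨Nat.pair j k + 1, ?_⟩⟩
    simpa only [chain, Nat.unpair_pair] using hf
  · obtain ⟨n, hn⟩ := Set.mem_iUnion.1 hf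
    exact ⟨_, (chain n).2, hn⟩

end Rule

def Ty.code : Ty → ℕ
  | .base n => Nat.pair 0 n
  | .arr σ τ => Nat.pair 1 (Nat.pair σ.code τ.code)

lemma Ty.code_injective : Function.Injective Ty.code := by
  intro σ τ h
  induction σ generalizing τ with
  | base n => cases τ <;> simp_all [Ty.code]
  | arr σ₁ σ₂ ih₁ ih₂ =>
    cases τ with
    | base m => simp [Ty.code] at h
    | arr τ₁ τ₂ =>
      simp only [Ty.code, Nat.pair_eq_pair, true_and] at h
      rw [ih₁ h.1, ih₂ h.2]

instance : Countable Ty := Ty.code_injective.countable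

def Tm.code : ∀ {σ : Ty}, Tm σ → ℕ
  | _, .var n σ => Nat.pair 0 (Nat.pair n σ.code)
  | _, .neg => Nat.pair 1 0
  | _, .eq σ => Nat.pair 2 σ.code
  | _, .app f a => Nat.pair 3 (Nat.pair f.code a.code)
  | _, .lam n σ b => Nat.pair 4 (Nat.pair n (Nat.pair σ.code b.code))

lemma Tm.code_injective : Function.Injective fun t : Σ σ, Tm σ => t.2.code := by
  rintro ⟨σ, s⟩ ⟨τ, t⟩ h
  dsimp only at h
  induction s generalizing τ with
  | var n σ =>
    cases t <;> simp [Tm.code, Ty.code_injective.eq_iff] at h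
    obtain ⟨rfl, rfl⟩ := h; rfl
  | neg => cases t <;> simp [Tm.code] at h ⊢
  | eq σ =>
    cases t <;> simp [Tm.code, Ty.code_injective.eq_iff] at h
    subst h; rfl
  | app f a ihf iha =>
    cases t <;> simp [Tm.code] at h
    cases ihf _ _ h.1
    cases iha _ _ h.2
    rfl
  | lam n σ b ih =>
    cases t <;> simp [Tm.code, Ty.code_injective.eq_iff] at h
    obtain ⟨rfl, rfl, hb⟩ := h
    cases ih _ _ hb
    rfl

instance (σ : Ty) : Countable (Tm σ) :=
  (Tm.code_injective.comp sigma_mk_injective).countable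

namespace Args

def append : ∀ {σ μ ρ : Ty}, Args σ μ → Args μ ρ → Args σ ρ
  | _, _, _, .nil, b => b
  | _, _, _, .cons t a, b => .cons t (a.append b)

@[simp] lemma append_nil : ∀ {σ μ : Ty} (a : Args σ μ), a.append .nil = a
  | _, _, .nil => rfl
  | _, _, .cons t a => congrArg (Args.cons t) (append_nil a)

def snoc : ∀ {σ μ ρ : Ty}, Args σ (Ty.arr μ ρ) → Tm μ → Args σ ρ
  | _, _, _, .nil, u => .cons u .nil
  | _, _, _, .cons t a, u => .cons t (a.snoc u)

lemma snoc_append : ∀ {σ μ ρ ρ' : Ty} (a : Args σ (Ty.arr μ ρ)) (u : Tm μ) (b : Args ρ ρ'),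
    (a.snoc u).append b = a.append (.cons u b)
  | _, _, _, _, .nil, _, _ => rfl
  | _, _, _, _, .cons t a, u, b => congrArg (Args.cons t) (snoc_append a u b)

end Args

def Tm.decomp : ∀ {ρ : Ty}, Tm ρ → Σ σ : Ty, Tm σ × Args σ ρ
  | _, .app f u => ⟨(decomp f).1, (decomp f).2.1, (decomp f).2.2.snoc u⟩
  | _, .var n σ => ⟨_, .var n σ, .nil⟩
  | _, .neg => ⟨_, .neg, .nil⟩
  | _, .eq σ => ⟨_, .eq σ, .nil⟩
  | _, .lam n σ s => ⟨_, .lam n σ s, .nil⟩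

lemma Tm.decomp_applyArgs : ∀ {σ ρ : Ty} (w : Tm σ) (a : Args σ ρ),
    (applyArgs w a).decomp = ⟨w.decomp.1, w.decomp.2.1, w.decomp.2.2.append a⟩
  | _, _, w, .nil => by simp [applyArgs]
  | _, _, w, .cons t a => by
    rw [applyArgs, decomp_applyArgs (.app w t) a]
    simp only [decomp, Args.snoc_append]

lemma applyArgs_var_injective (x : ℕ) (σ ρ : Ty) :
    Function.Injective (applyArgs (Tm.var x σ) : Args σ ρ → Tm ρ) := by
  intro a b h
  have := congrArg Tm.decomp h
  simpa [Tm.decomp_applyArgs, Tm.decomp, Args.append] using this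

instance (σ ρ : Ty) : Countable (Args σ ρ) := (applyArgs_var_injective 0 σ ρ).countable

lemma Args2.left_right_injective (σ ρ : Ty) :
    Function.Injective fun p : Args2 σ ρ => (p.left, p.right) := by
  intro p q h
  induction p with
  | nil => cases q <;> simp_all [Args2.left]
  | cons s t p ih =>
    cases q with
    | nil => cases h
    | cons s' t' q =>
      simp only [Args2.left, Args2.right, Prod.mk.injEq, Args.cons.injEq] at h
      rw [h.1.1, h.2.1, ih (Prod.ext h.1.2 h.2.2)]

instance (σ ρ : Ty) : Countable (Args2 σ ρ) := (Args2.left_right_injective σ ρ).countable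

@[simp] lemma Tm.Not_inj {s t : Tm Ty.o} : Tm.Not s = Tm.Not t ↔ s = t := by
  simp [Tm.Not]

@[simp] lemma Tm.Eqn_inj {σ : Ty} {s t s' t' : Tm σ} :
    Tm.Eqn s t = Tm.Eqn s' t' ↔ s = s' ∧ t = t' := by
  simp [Tm.Eqn]

namespace NormOp

variable (Ω : NormOp)

abbrev nfSpine {σ ρ : Ty} (a : Args σ ρ) : Args σ ρ := nfArgs (fun _ s => Ω.nf s) a

lemma nf_Not (s : Tm Ty.o) : Ω.nf (Tm.Not s) = Tm.Not (Ω.nf s) :=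
  Ω.n3 (β := 0) Tm.neg Atomic.neg (.cons s .nil)

lemma nf_Eqn {σ : Ty} (s t : Tm σ) : Ω.nf (Tm.Eqn s t) = Tm.Eqn (Ω.nf s) (Ω.nf t) :=
  Ω.n3 (β := 0) (Tm.eq σ) (Atomic.eq σ) (.cons s (.cons t .nil))

lemma nf_Diseq {σ : Ty} (s t : Tm σ) : Ω.nf (Tm.Diseq s t) = Tm.Diseq (Ω.nf s) (Ω.nf t) := by
  rw [Tm.Diseq, nf_Not, nf_Eqn, Tm.Diseq]

lemma nf_applyArgs_var {σ : Ty} {β : ℕ} (x : ℕ) (a : Args σ (Ty.base β)) :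
    Ω.nf (applyArgs (Tm.var x σ) a) = applyArgs (Tm.var x σ) (Ω.nfSpine a) :=
  Ω.n3 (Tm.var x σ) (Atomic.var x σ) a

lemma nf_var_o (x : ℕ) : Ω.nf (Tm.var x Ty.o) = Tm.var x Ty.o :=
  Ω.nf_applyArgs_var (β := 0) x .nil

lemma nf_app_congr {σ τ : Ty} {s s' : Tm (Ty.arr σ τ)} (h : Ω.nf s = Ω.nf s') (t : Tm σ) :
    Ω.nf (Tm.app s t) = Ω.nf (Tm.app s' t) := by
  rw [← Ω.n2 s t, h, Ω.n2]

variable {Ω}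

lemma normal_of_normal_Not {s : Tm Ty.o} (h : Ω.nf (Tm.Not s) = Tm.Not s) : Ω.nf s = s := by
  rwa [nf_Not, Tm.Not_inj] at h

lemma normal_of_normal_Eqn {σ : Ty} {s t : Tm σ} (h : Ω.nf (Tm.Eqn s t) = Tm.Eqn s t) :
    Ω.nf s = s ∧ Ω.nf t = t := by
  rwa [nf_Eqn, Tm.Eqn_inj] at h

lemma normal_of_normal_Diseq {σ : Ty} {s t : Tm σ} (h : Ω.nf (Tm.Diseq s t) = Tm.Diseq s t) :
    Ω.nf s = s ∧ Ω.nf t = t :=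
  normal_of_normal_Eqn (normal_of_normal_Not h)

lemma normal_Not {s : Tm Ty.o} (h : Ω.nf s = s) : Ω.nf (Tm.Not s) = Tm.Not s := by
  rw [nf_Not, h]

lemma normal_Diseq {σ : Ty} {s t : Tm σ} (hs : Ω.nf s = s) (ht : Ω.nf t = t) :
    Ω.nf (Tm.Diseq s t) = Tm.Diseq s t := by
  rw [nf_Diseq, hs, ht]

lemma nfSpine_eq_of_normal_applyArgs_var {σ : Ty} {β x : ℕ} {a : Args σ (Ty.base β)}
    (h : Ω.nf (applyArgs (Tm.var x σ) a) = applyArgs (Tm.var x σ) a) : Ω.nfSpine a = a :=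
  applyArgs_var_injective x σ _ ((Ω.nf_applyArgs_var x a).symm.trans h)

lemma normal_of_mem_diseqs {σ ρ : Ty} {p : Args2 σ ρ} (hl : Ω.nfSpine p.left = p.left)
    (hr : Ω.nfSpine p.right = p.right) {d : Tm Ty.o} (hd : d ∈ p.diseqs) : Ω.nf d = d := by
  induction p with
  | nil => cases hd
  | cons s t p ih =>
    simp only [Args2.left, Args2.right, nfArgs, Args.cons.injEq] at hl hr
    rcases List.mem_cons.1 hd with rfl | hd
    · exact normal_Diseq hl.1 hr.1
    · exact ih hl.2 hr.2 hd

end NormOp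

lemma Tm.finite_freeIn (μ : Ty) : ∀ {σ : Ty} (u : Tm σ), {x | FreeIn x μ u}.Finite
  | _, .var n _ => (Set.finite_singleton n).subset fun _ hx => hx.1
  | _, .neg => Set.finite_empty.subset fun _ hx => hx
  | _, .eq _ => Set.finite_empty.subset fun _ hx => hx
  | _, .app s t => ((s.finite_freeIn μ).union (t.finite_freeIn μ)).subset fun _ hx => hx
  | _, .lam _ _ s => (s.finite_freeIn μ).subset fun _ hx => hx.2

lemma Set.Finite.exists_fresh {A : Set (Tm Ty.o)} (hA : A.Finite) (μ : Ty) :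
    ∃ x, ∀ u ∈ A, ¬ FreeIn x μ u := by
  obtain ⟨x, hx⟩ := (hA.biUnion fun u _ => u.finite_freeIn μ).exists_notMem
  exact ⟨x, by simpa using hx⟩

def nonRefutableBranches (Ω : NormOp) : Set (Set (Tm Ty.o)) :=
  {A | A.Finite ∧ (∀ s ∈ A, Ω.nf s = s) ∧ ¬ Refutable Ω A}

namespace nonRefutableBranches

variable {Ω : NormOp} {A : Set (Tm Ty.o)}

lemma not_closed (hA : A ∈ nonRefutableBranches Ω) : ¬ ClosedB A :=
  fun h => hA.2.2 (.closed h)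

lemma refutable_insert {s : Tm Ty.o} (hA : A ∈ nonRefutableBranches Ω) (hs : Ω.nf s = s)
    (h : insert s A ∉ nonRefutableBranches Ω) : Refutable Ω (insert s A) :=
  not_not.1 fun hr => h ⟨hA.1.insert s, Set.forall_mem_insert.2 ⟨hs, hA.2.1⟩, hr⟩

lemma refutable_insert₂ {s t : Tm Ty.o} (hA : A ∈ nonRefutableBranches Ω) (hs : Ω.nf s = s)
    (ht : Ω.nf t = t) (h : insert s (insert t A) ∉ nonRefutableBranches Ω) :
    Refutable Ω (insert s (insert t A)) :=
  not_not.1 fun hr => h ⟨(hA.1.insert t).insert s,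
    Set.forall_mem_insert.2 ⟨hs, Set.forall_mem_insert.2 ⟨ht, hA.2.1⟩⟩, hr⟩

open NormOp

theorem acc (Ω : NormOp) : ACC Ω (nonRefutableBranches Ω) where
  dn A hA s hs := by
    by_contra h
    exact hA.2.2 (.dn (not_closed hA) hs (refutable_insert hA
      (normal_of_normal_Not (normal_of_normal_Not (hA.2.1 _ hs))) h))
  bq A hA s t hst := by
    obtain ⟨hs, ht⟩ := normal_of_normal_Eqn (hA.2.1 _ hst)
    by_contra! h
    exact hA.2.2 (.bq s t (not_closed hA) hst (refutable_insert₂ hA hs ht h.1)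
      (refutable_insert₂ hA (normal_Not hs) (normal_Not ht) h.2))
  be A hA s t hst := by
    obtain ⟨hs, ht⟩ := normal_of_normal_Diseq (hA.2.1 _ hst)
    by_contra! h
    exact hA.2.2 (.be s t (not_closed hA) hst (refutable_insert₂ hA hs (normal_Not ht) h.1)
      (refutable_insert₂ hA (normal_Not hs) ht h.2))
  fq A hA σ τ s t hst u hu := by
    by_contra h
    exact hA.2.2 (.fq s t u (not_closed hA) hst hu
      (refutable_insert hA (by rw [nf_Eqn, Ω.n1, Ω.n1]) h))
  fe A hA σ τ s t hst := by
    -- `Refutable.fe` only introduces a fresh instance when none is present yet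
    by_cases hdone : ∃ y : ℕ,
        Tm.Diseq (Ω.nf (Tm.app s (Tm.var y σ))) (Ω.nf (Tm.app t (Tm.var y σ))) ∈ A
    · obtain ⟨y, hy⟩ := hdone
      exact ⟨y, by rwa [Set.insert_eq_of_mem hy]⟩
    obtain ⟨x, hx⟩ := hA.1.exists_fresh σ
    refine ⟨x, not_not.1 fun h => hA.2.2 (.fe s t x (not_closed hA) hst hx hdone ?_)⟩
    exact refutable_insert hA (by rw [nf_Diseq, Ω.n1, Ω.n1]) h
  mat A hA σ x p hl hr := by
    have hnl := nfSpine_eq_of_normal_applyArgs_var (hA.2.1 _ hl)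
    have hnr := nfSpine_eq_of_normal_applyArgs_var (normal_of_normal_Not (hA.2.1 _ hr))
    by_contra! h
    exact hA.2.2 (.mat x p (not_closed hA) hl hr fun d hd =>
      refutable_insert hA (normal_of_mem_diseqs hnl hnr hd) (h d hd))
  dec A hA σ α x p hd := by
    obtain ⟨hl, hr⟩ := normal_of_normal_Diseq (hA.2.1 _ hd)
    have hnl := nfSpine_eq_of_normal_applyArgs_var hl
    have hnr := nfSpine_eq_of_normal_applyArgs_var hr
    by_contra! h
    exact hA.2.2 (.dec x p (not_closed hA) hd fun d hd =>
      refutable_insert hA (normal_of_mem_diseqs hnl hnr hd) (h d hd))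
  con A hA α s t u v hst huv := by
    obtain ⟨hs, ht⟩ := normal_of_normal_Eqn (hA.2.1 _ hst)
    obtain ⟨hu, hv⟩ := normal_of_normal_Diseq (hA.2.1 _ huv)
    by_contra! h
    exact hA.2.2 (.con s t u v (not_closed hA) hst huv
      (refutable_insert₂ hA (normal_Diseq hs hu) (normal_Diseq ht hu) h.1)
      (refutable_insert₂ hA (normal_Diseq hs hv) (normal_Diseq ht hv) h.2))

end nonRefutableBranches

inductive TableauRule : Type
  | dn (s : Tm Ty.o)
  | bq (s t : Tm Ty.o)
  | be (s t : Tm Ty.o)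
  | fq {σ τ : Ty} (s t : Tm (Ty.arr σ τ)) (u : Tm σ)
  | fe {σ τ : Ty} (s t : Tm (Ty.arr σ τ))
  | mat {σ : Ty} (x : ℕ) (p : Args2 σ Ty.o)
  | dec {σ : Ty} {α : ℕ} (x : ℕ) (p : Args2 σ (Ty.sort α))
  | con {α : ℕ} (s t u v : Tm (Ty.sort α))
  deriving Countable

namespace TableauRule

/-- The `fq` instance for `u` instantiates with `Ω.nf u`, as `ACC.fq` only allows normal
terms. -/
def toRule (Ω : NormOp) : TableauRule → Rule (Tm Ty.o)
  | dn s => ⟨{Tm.Not (Tm.Not s)}, {{s}}⟩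
  | bq s t => ⟨{Tm.Eqn s t}, {{s, t}, {Tm.Not s, Tm.Not t}}⟩
  | be s t => ⟨{Tm.Diseq s t}, {{s, Tm.Not t}, {Tm.Not s, t}}⟩
  | fq s t u => ⟨{Tm.Eqn s t}, {{Tm.Eqn (Ω.nf (Tm.app s (Ω.nf u))) (Ω.nf (Tm.app t (Ω.nf u)))}}⟩
  | @fe σ _ s t => ⟨{Tm.Diseq s t},
      Set.range fun x => {Tm.Diseq (Ω.nf (Tm.app s (Tm.var x σ))) (Ω.nf (Tm.app t (Tm.var x σ)))}⟩
  | @mat σ x p => ⟨{applyArgs (Tm.var x σ) p.left, Tm.Not (applyArgs (Tm.var x σ) p.right)},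
      {C | ∃ d ∈ p.diseqs, C = {d}}⟩
  | @dec σ _ x p => ⟨{Tm.Diseq (applyArgs (Tm.var x σ) p.left) (applyArgs (Tm.var x σ) p.right)},
      {C | ∃ d ∈ p.diseqs, C = {d}}⟩
  | con s t u v => ⟨{Tm.Eqn s t, Tm.Diseq u v},
      {{Tm.Diseq s u, Tm.Diseq t u}, {Tm.Diseq s v, Tm.Diseq t v}}⟩

lemma finite_prem (Ω : NormOp) (r : TableauRule) : (r.toRule Ω).prem.Finite := by
  cases r <;> dsimp only [toRule] <;> exact Set.toFinite _

variable {Ω : NormOp}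

lemma consistent_of_acc {Γ : Set (Set (Tm Ty.o))} (hΓ : ACC Ω Γ) :
    ∀ r : TableauRule, (r.toRule Ω).Consistent Γ := by
  intro r A hA hprem
  cases r <;> simp only [toRule, Set.singleton_subset_iff, Set.insert_subset_iff] at hprem ⊢
  case dn s => simpa using hΓ.dn A hA s hprem
  case bq s t => simpa [Set.insert_union] using hΓ.bq A hA s t hprem
  case be s t => simpa [Set.insert_union] using hΓ.be A hA s t hprem
  case fq s t u => simpa using hΓ.fq A hA s t hprem (Ω.nf u) (Ω.n1 u)
  case fe s t => simpa using hΓ.fe A hA s t hprem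
  case mat x p => simpa using hΓ.mat A hA x p hprem.1 hprem.2
  case dec x p => simpa using hΓ.dec A hA x p hprem
  case con s t u v => simpa [Set.insert_union] using hΓ.con A hA s t u v hprem.1 hprem.2

lemma evident_of_saturated {E : Set (Tm Ty.o)} (hE : ∀ r : TableauRule, (r.toRule Ω).Saturated E) :
    Evident Ω E where
  dn s hs := by simpa [toRule] using hE (dn s) (by simpa [toRule] using hs)
  bq s t h := by simpa [toRule, Set.insert_subset_iff] using hE (bq s t) (by simpa [toRule] using h)
  be s t h := by simpa [toRule, Set.insert_subset_iff] using hE (be s t) (by simpa [toRule] using h)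
  fq s t h u hu := by simpa [toRule, hu] using hE (fq s t u) (by simpa [toRule] using h)
  fe s t h := by simpa [toRule] using hE (fe s t) (by simpa [toRule] using h)
  mat x p hl hr := by
    simpa [toRule] using hE (mat x p) (by simpa [toRule, Set.insert_subset_iff] using ⟨hl, hr⟩)
  dec x p h := by simpa [toRule] using hE (dec x p) (by simpa [toRule] using h)
  con s t u v h h' := by
    simpa [toRule, Set.insert_subset_iff] using
      hE (con s t u v) (by simpa [toRule, Set.insert_subset_iff] using ⟨h, h'⟩)

end TableauRule

theorem ACC.exists_evident_superset {Ω : NormOp} {Γ : Set (Set (Tm Ty.o))} (hΓ : ACC Ω Γ)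
    {A : Set (Tm Ty.o)} (hA : A ∈ Γ) : ∃ E, A ⊆ E ∧ Evident Ω E ∧ ∀ s ∈ E, ∃ B ∈ Γ, s ∈ B :=
  let ⟨E, hAE, hsat, hE⟩ := Rule.exists_saturated_superset (TableauRule.finite_prem Ω)
    (TableauRule.consistent_of_acc hΓ) hA
  ⟨E, hAE, TableauRule.evident_of_saturated hsat, hE⟩

namespace Args2

def swap : ∀ {σ ρ : Ty}, Args2 σ ρ → Args2 σ ρ
  | _, _, .nil => .nil
  | _, _, .cons u v p => .cons v u p.swap

@[simp] lemma swap_left : ∀ {σ ρ : Ty} (p : Args2 σ ρ), p.swap.left = p.right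
  | _, _, .nil => rfl
  | _, _, .cons _ v p => congrArg (Args.cons v) (swap_left p)

@[simp] lemma swap_right : ∀ {σ ρ : Ty} (p : Args2 σ ρ), p.swap.right = p.left
  | _, _, .nil => rfl
  | _, _, .cons u _ p => congrArg (Args.cons u) (swap_right p)

def nf (Ω : NormOp) : ∀ {σ ρ : Ty}, Args2 σ ρ → Args2 σ ρ
  | _, _, .nil => .nil
  | _, _, .cons u v p => .cons (Ω.nf u) (Ω.nf v) (p.nf Ω)

@[simp] lemma nf_left (Ω : NormOp) : ∀ {σ ρ : Ty} (p : Args2 σ ρ),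
    (p.nf Ω).left = Ω.nfSpine p.left
  | _, _, .nil => rfl
  | _, _, .cons u _ p => congrArg (Args.cons (Ω.nf u)) (nf_left Ω p)

@[simp] lemma nf_right (Ω : NormOp) : ∀ {σ ρ : Ty} (p : Args2 σ ρ),
    (p.nf Ω).right = Ω.nfSpine p.right
  | _, _, .nil => rfl
  | _, _, .cons _ v p => congrArg (Args.cons (Ω.nf v)) (nf_right Ω p)

def Forall (R : ∀ σ : Ty, Tm σ → Tm σ → Prop) : ∀ {σ ρ : Ty}, Args2 σ ρ → Prop
  | _, _, .nil => True
  | _, _, .cons u v p => R _ u v ∧ p.Forall R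

end Args2

section Compat

variable {Ω : NormOp} {E : Set (Tm Ty.o)}

lemma compat_symm : ∀ {σ : Ty} {s t : Tm σ}, compat Ω E σ s t → compat Ω E σ t s
  | .base 0, _, _, h => ⟨fun h' => h.2 h'.symm, fun h' => h.1 h'.symm⟩
  | .base (_ + 1), _, _, h => fun h' => h h'.symm
  | .arr _ _, _, _, h => fun _ _ huv => compat_symm (h _ _ (compat_symm huv))

lemma compat_congr_left : ∀ {σ : Ty} {s s' t : Tm σ}, Ω.nf s = Ω.nf s' →
    compat Ω E σ s t → compat Ω E σ s' t
  | .base 0, _, _, _, he, h => by simp only [compat] at h ⊢; rwa [← he]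
  | .base (_ + 1), _, _, _, he, h => by simp only [compat] at h ⊢; rwa [← he]
  | .arr _ _, _, _, _, he, h => fun u v huv => compat_congr_left (Ω.nf_app_congr he u) (h u v huv)

lemma compat_congr_right {σ : Ty} {s t t' : Tm σ} (he : Ω.nf t = Ω.nf t')
    (h : compat Ω E σ s t) : compat Ω E σ s t' :=
  compat_symm (compat_congr_left he (compat_symm h))

lemma Args2.Forall.swap : ∀ {σ ρ : Ty} {p : Args2 σ ρ}, p.Forall (compat Ω E) →
    p.swap.Forall (compat Ω E)
  | _, _, .nil, _ => trivial
  | _, _, .cons _ _ _, h => ⟨compat_symm h.1, Args2.Forall.swap h.2⟩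

lemma compat_of_forall_spine : ∀ {σ : Ty} {s t : Tm σ},
    (∀ (β : ℕ) (q : Args2 σ (Ty.base β)), q.Forall (compat Ω E) →
      compat Ω E (Ty.base β) (applyArgs s q.left) (applyArgs t q.right)) →
    compat Ω E σ s t
  | .base β, _, _, h => h β .nil trivial
  | .arr _ _, _, _, h => fun u v huv =>
      compat_of_forall_spine fun β q hq => h β (.cons u v q) ⟨huv, hq⟩

variable (Ω E) in
def Separated (σ : Ty) : Prop :=
  ∀ u v : Tm σ, compat Ω E σ u v → ¬ hashE E (Ω.nf u) (Ω.nf v)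

variable (Ω E) in
def ArgsSeparated : Ty → Prop
  | .base _ => True
  | .arr σ τ => Separated Ω E σ ∧ ArgsSeparated τ

lemma Args2.diseqs_nf_notMem : ∀ {σ ρ : Ty} {q : Args2 σ ρ}, ArgsSeparated Ω E σ →
    q.Forall (compat Ω E) → ∀ d ∈ (q.nf Ω).diseqs, d ∉ E
  | _, _, .nil, _, _, d, hd => by cases hd
  | _, _, .cons u v q, hsep, hq, d, hd => by
    rcases List.mem_cons.1 hd with rfl | hd
    · exact fun hdE => hsep.1 u v hq.1 (Or.inl hdE)
    · exact Args2.diseqs_nf_notMem hsep.2 hq.2 d hd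

namespace Evident

variable (hE : Evident Ω E)
include hE

lemma not_mem_and_Not_mem_applyArgs_var {σ : Ty} {q : Args2 σ Ty.o} (hsep : ArgsSeparated Ω E σ)
    (hq : q.Forall (compat Ω E)) (x : ℕ) :
    ¬(Ω.nf (applyArgs (Tm.var x σ) q.left) ∈ E ∧
      Tm.Not (Ω.nf (applyArgs (Tm.var x σ) q.right)) ∈ E) := by
  rintro ⟨hl, hr⟩
  rw [Ω.nf_applyArgs_var, ← Args2.nf_left] at hl
  rw [Ω.nf_applyArgs_var, ← Args2.nf_right] at hr
  obtain ⟨d, hd, hdE⟩ := hE.mat x (q.nf Ω) hl hr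
  exact q.diseqs_nf_notMem hsep hq d hd hdE

lemma Diseq_applyArgs_var_notMem {σ : Ty} {α : ℕ} {q : Args2 σ (Ty.sort α)}
    (hsep : ArgsSeparated Ω E σ) (hq : q.Forall (compat Ω E)) (x : ℕ) :
    Tm.Diseq (Ω.nf (applyArgs (Tm.var x σ) q.left)) (Ω.nf (applyArgs (Tm.var x σ) q.right))
      ∉ E := by
  intro h
  rw [Ω.nf_applyArgs_var, Ω.nf_applyArgs_var, ← Args2.nf_left, ← Args2.nf_right] at h
  obtain ⟨d, hd, hdE⟩ := hE.dec x (q.nf Ω) h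
  exact q.diseqs_nf_notMem hsep hq d hd hdE

lemma compat_var_of_argsSeparated {σ : Ty} (hsep : ArgsSeparated Ω E σ) (x : ℕ) :
    compat Ω E σ (Tm.var x σ) (Tm.var x σ) := by
  refine compat_of_forall_spine fun β q hq => ?_
  cases β with
  | zero =>
    refine ⟨hE.not_mem_and_Not_mem_applyArgs_var hsep hq x, fun h => ?_⟩
    exact hE.not_mem_and_Not_mem_applyArgs_var hsep hq.swap x (by simpa using h.symm)
  | succ α =>
    rintro (h | h)
    · exact hE.Diseq_applyArgs_var_notMem hsep hq x h
    · exact hE.Diseq_applyArgs_var_notMem hsep hq.swap x (by simpa using h)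

lemma separated_and_argsSeparated : ∀ σ : Ty, Separated Ω E σ ∧ ArgsSeparated Ω E σ
  | .base 0 => ⟨fun _ _ hc h => by
      rcases h with h | h <;> rcases hE.be _ _ h with ⟨h1, h2⟩ | ⟨h1, h2⟩
      exacts [hc.1 ⟨h1, h2⟩, hc.2 ⟨h1, h2⟩, hc.2 ⟨h2, h1⟩, hc.1 ⟨h2, h1⟩], trivial⟩
  | .base (_ + 1) => ⟨fun _ _ hc => hc, trivial⟩
  | .arr σ τ => by
    obtain ⟨hσ, hσargs⟩ := separated_and_argsSeparated σ
    obtain ⟨hτ, hτargs⟩ := separated_and_argsSeparated τ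
    refine ⟨fun u v hc h => ?_, hσ, hτargs⟩
    -- functional extensionality yields a variable `x` separating `u x` from `v x`
    have hcx := fun x => hc _ _ (hE.compat_var_of_argsSeparated hσargs x)
    rcases h with h | h <;> obtain ⟨x, hx⟩ := hE.fe _ _ h <;> rw [Ω.n2, Ω.n2] at hx
    exacts [hτ _ _ (hcx x) (Or.inl hx), hτ _ _ (hcx x) (Or.inr hx)]

lemma compat_var (x : ℕ) (σ : Ty) : compat Ω E σ (Tm.var x σ) (Tm.var x σ) :=
  hE.compat_var_of_argsSeparated (hE.separated_and_argsSeparated σ).2 x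

lemma not_hashE_of_compat {σ : Ty} {u v : Tm σ} (h : compat Ω E σ u v) :
    ¬ hashE E (Ω.nf u) (Ω.nf v) :=
  (hE.separated_and_argsSeparated σ).1 u v h

lemma compat_neg : compat Ω E (Ty.arr Ty.o Ty.o) Tm.neg Tm.neg := by
  intro u v huv
  show compat Ω E Ty.o (Tm.Not u) (Tm.Not v)
  simp only [compat, Ω.nf_Not]
  exact ⟨fun h => huv.2 ⟨h.1, hE.dn _ h.2⟩, fun h => huv.1 ⟨hE.dn _ h.1, h.2⟩⟩

lemma false_of_compat_of_Eqn_of_Diseq : ∀ {σ : Ty} {s t u v : Tm σ},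
    compat Ω E σ s t → compat Ω E σ u v →
    Tm.Eqn (Ω.nf s) (Ω.nf u) ∈ E → Tm.Diseq (Ω.nf t) (Ω.nf v) ∈ E → False
  | .base 0, _, _, _, _, hst, huv, he, hd => by
    rcases hE.bq _ _ he with ⟨h1, h2⟩ | ⟨h1, h2⟩ <;>
      rcases hE.be _ _ hd with ⟨h3, h4⟩ | ⟨h3, h4⟩
    exacts [huv.1 ⟨h2, h4⟩, hst.1 ⟨h1, h3⟩, hst.2 ⟨h1, h3⟩, huv.2 ⟨h2, h4⟩]
  | .base (_ + 1), _, _, _, _, hst, huv, he, hd => by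
    rcases hE.con _ _ _ _ he hd with ⟨h1, h2⟩ | ⟨h1, h2⟩
    exacts [hst (Or.inl h1), huv (Or.inl h2)]
  | .arr σ _, _, _, _, _, hst, huv, he, hd => by
    obtain ⟨x, hx⟩ := hE.fe _ _ hd
    have hx' := hE.fq _ _ he (Ω.nf (Tm.var x σ)) (Ω.n1 _)
    rw [Ω.n2, Ω.n2] at hx hx'
    have hxx : compat Ω E σ (Ω.nf (Tm.var x σ)) (Tm.var x σ) :=
      compat_congr_left (Ω.n1 _).symm (hE.compat_var x σ)
    exact false_of_compat_of_Eqn_of_Diseq (hst _ _ hxx) (huv _ _ hxx) hx' hx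

lemma compat_eq (σ : Ty) : compat Ω E (Ty.arr σ (Ty.arr σ Ty.o)) (Tm.eq σ) (Tm.eq σ) := by
  intro s t hst u v huv
  show compat Ω E Ty.o (Tm.Eqn s u) (Tm.Eqn t v)
  simp only [compat, Ω.nf_Eqn]
  exact ⟨fun h => hE.false_of_compat_of_Eqn_of_Diseq hst huv h.1 h.2,
    fun h => hE.false_of_compat_of_Eqn_of_Diseq (compat_symm hst) (compat_symm huv) h.2 h.1⟩

lemma compat_sub : ∀ {σ : Ty} (s : Tm σ) {θ θ' : ℕ → (σ : Ty) → Option (Tm σ)},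
    (∀ (n : ℕ) (μ : Ty),
      compat Ω E μ ((θ n μ).getD (Tm.var n μ)) ((θ' n μ).getD (Tm.var n μ))) →
    compat Ω E σ (Ω.sub θ s) (Ω.sub θ' s)
  | _, .var n σ, _, _, hθ => by rw [Ω.s1, Ω.s1]; exact hθ n σ
  | _, .neg, _, _, _ => by rw [Ω.s1neg, Ω.s1neg]; exact hE.compat_neg
  | _, .eq σ, _, _, _ => by rw [Ω.s1eq, Ω.s1eq]; exact hE.compat_eq σ
  | _, .app f a, _, _, hθ => by
    rw [Ω.s2, Ω.s2]
    exact compat_sub f hθ _ _ (compat_sub a hθ)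
  | _, .lam x σ b, θ, θ', hθ => fun u v huv => by
    refine compat_congr_left (Ω.s3 θ x σ b u).symm (compat_congr_right (Ω.s3 θ' x σ b v).symm ?_)
    refine compat_sub b fun n μ => ?_
    unfold updS
    split
    · obtain ⟨rfl, rfl⟩ := ‹n = x ∧ μ = σ›
      exact huv
    · exact hθ n μ

lemma compat_self {σ : Ty} (s : Tm σ) : compat Ω E σ s s :=
  compat_congr_left (Ω.s4 s) (compat_congr_right (Ω.s4 s)
    (hE.compat_sub s fun n μ => hE.compat_var n μ))

lemma not_mem_and_Not_mem {s : Tm Ty.o} (hs : Ω.nf s = s) : ¬(s ∈ E ∧ Tm.Not s ∈ E) := by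
  simpa [compat, hs] using (hE.compat_self s).1

lemma Diseq_self_notMem {s : Tm Ty.o} (hs : Ω.nf s = s) : Tm.Diseq s s ∉ E := by
  intro h
  rcases hE.be s s h with ⟨h1, h2⟩ | ⟨h1, h2⟩
  exacts [hE.not_mem_and_Not_mem hs ⟨h1, h2⟩, hE.not_mem_and_Not_mem hs ⟨h2, h1⟩]

end Evident

end Compat

section Values

variable {Ω : NormOp} {E : Set (Tm Ty.o)}

lemma exists_isDiscriminant_superset (E : Set (Tm Ty.o)) (α : ℕ) {b : Set (Tm (Ty.sort α))}
    (hb : ∀ u ∈ b, Discriminating E u) (hbE : ∀ s ∈ b, ∀ t ∈ b, Tm.Diseq s t ∉ E) :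
    ∃ a, IsDiscriminant E α a ∧ b ⊆ a := by
  let S : Set (Set (Tm (Ty.sort α))) :=
    {c | b ⊆ c ∧ (∀ u ∈ c, Discriminating E u) ∧ ∀ s ∈ c, ∀ t ∈ c, Tm.Diseq s t ∉ E}
  have hchain : ∀ c ⊆ S, IsChain (· ⊆ ·) c → c.Nonempty → ∃ ub ∈ S, ∀ s ∈ c, s ⊆ ub := by
    intro c hcS hc ⟨c₀, hc₀⟩
    refine ⟨⋃₀ c, ⟨(hcS hc₀).1.trans (Set.subset_sUnion_of_mem hc₀), ?_, ?_⟩,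
      fun _ => Set.subset_sUnion_of_mem⟩
    · rintro u ⟨d, hd, hu⟩
      exact (hcS hd).2.1 u hu
    · rintro s ⟨d₁, hd₁, hs⟩ t ⟨d₂, hd₂, ht⟩
      rcases hc.total hd₁ hd₂ with h | h
      exacts [(hcS hd₂).2.2 s (h hs) t ht, (hcS hd₁).2.2 s hs t (h ht)]
  obtain ⟨m, hbm, hmS, hmax⟩ := zorn_subset_nonempty S hchain b ⟨subset_rfl, hb, hbE⟩
  exact ⟨m, ⟨hmS.2.1, hmS.2.2, fun c hmc hc hcE =>
    (hmax ⟨hbm.trans hmc, hc, hcE⟩ hmc).antisymm hmc⟩, hbm⟩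

lemma IsDiscriminant.eq_empty {α : ℕ} (hno : ∀ u v : Tm (Ty.sort α), Tm.Diseq u v ∉ E)
    {a : Set (Tm (Ty.sort α))} (ha : IsDiscriminant E α a) : a = ∅ := by
  refine Set.eq_empty_iff_forall_notMem.2 fun u hu => ?_
  obtain ⟨t, ht | ht⟩ := ha.1 u hu
  exacts [hno u t ht, hno t u ht]

namespace Evident

variable (hE : Evident Ω E)
include hE

lemma discriminating_of_Eqn {α : ℕ} {s t u v : Tm (Ty.sort α)} (he : Tm.Eqn s t ∈ E)
    (hd : Tm.Diseq u v ∈ E) : Discriminating E s ∧ Discriminating E t := by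
  rcases hE.con s t u v he hd with ⟨h1, h2⟩ | ⟨h1, h2⟩
  exacts [⟨⟨u, Or.inl h1⟩, ⟨u, Or.inl h2⟩⟩, ⟨⟨v, Or.inl h1⟩, ⟨v, Or.inl h2⟩⟩]

/-- By `con`, no disequation separates the two discriminants, so their union is admissible and
maximality forces both to be equal to it. -/
lemma isDiscriminant_eq_of_Eqn {α : ℕ} {s t : Tm (Ty.sort α)} (he : Tm.Eqn s t ∈ E)
    {a a' : Set (Tm (Ty.sort α))} (ha : IsDiscriminant E α a) (ha' : IsDiscriminant E α a')
    (hs : s ∈ a) (ht : t ∈ a') : a = a' := by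
  have cross : ∀ w ∈ a, ∀ w' ∈ a', Tm.Diseq w w' ∉ E ∧ Tm.Diseq w' w ∉ E := by
    intro w hw w' hw'
    constructor <;> intro hd
    · rcases hE.con s t w w' he hd with ⟨h1, -⟩ | ⟨-, h2⟩
      exacts [ha.2.1 s hs w hw h1, ha'.2.1 t ht w' hw' h2]
    · rcases hE.con s t w' w he hd with ⟨-, h2⟩ | ⟨h1, -⟩
      exacts [ha'.2.1 t ht w' hw' h2, ha.2.1 s hs w hw h1]
  have hdisc : ∀ u ∈ a ∪ a', Discriminating E u := by
    rintro u (hu | hu)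
    exacts [ha.1 u hu, ha'.1 u hu]
  have hsep : ∀ w ∈ a ∪ a', ∀ w' ∈ a ∪ a', Tm.Diseq w w' ∉ E := by
    rintro w (hw | hw) w' (hw' | hw')
    exacts [ha.2.1 w hw w' hw', (cross w hw w' hw').1, (cross w' hw' w hw).2, ha'.2.1 w hw w' hw']
  exact (ha.2.2 _ Set.subset_union_left hdisc hsep).symm.trans
    (ha'.2.2 _ Set.subset_union_right hdisc hsep)

end Evident

variable (Ω E) in
abbrev SemVal (σ : Ty) : Type := (sem Ω E σ).1

variable (Ω E) in
abbrev IsValue {σ : Ty} (s : Tm σ) (a : SemVal Ω E σ) : Prop := (sem Ω E σ).2 s a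

variable (Ω E) in
/-- The arguments of functional values, and the domains of the model built from `E`. -/
abbrev RealizedVal (σ : Ty) : Type := {a : SemVal Ω E σ // ∃ t : Tm σ, IsValue Ω E t a}

lemma IsValue.of_nf_eq : ∀ {σ : Ty} {s s' : Tm σ}, Ω.nf s = Ω.nf s' → ∀ {a : SemVal Ω E σ},
    IsValue Ω E s a → IsValue Ω E s' a
  | .base 0, _, _, he, _, h => by simp only [IsValue, sem] at h ⊢; rwa [← he]
  | .base (_ + 1), _, _, he, _, h => by simp only [IsValue, sem] at h ⊢; rwa [← he]
  | .arr _ _, _, _, he, _, h => fun t x hx => IsValue.of_nf_eq (Ω.nf_app_congr he t) (h t x hx)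

namespace Evident

variable (hE : Evident Ω E)
include hE

lemma exists_isValue_sort {α : ℕ} {F : Set (Tm (Ty.sort α))}
    (hF : ∀ s ∈ F, ∀ t ∈ F, compat Ω E _ s t) :
    ∃ a : SemVal Ω E (Ty.sort α), ∀ s ∈ F, IsValue Ω E s a := by
  obtain ⟨a, ha, hsub⟩ := exists_isDiscriminant_superset E α
    (b := {w | ∃ s ∈ F, w = Ω.nf s ∧ Discriminating E w})
    (by rintro _ ⟨s, -, rfl, hs⟩; exact hs)
    (by rintro _ ⟨s, hs, rfl, -⟩ _ ⟨t, ht, rfl, -⟩ hd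
        exact hE.not_hashE_of_compat (hF s hs t ht) (Or.inl hd))
  exact ⟨a, fun s hs => ⟨ha, fun hd => hsub ⟨s, hs, rfl, hd⟩⟩⟩

/-- At an arrow type, each of the two claims needs the other one at the domain type. -/
lemma compat_of_isValue_and_exists_isValue : ∀ σ : Ty,
    (∀ (s t : Tm σ) (a : SemVal Ω E σ), IsValue Ω E s a → IsValue Ω E t a → compat Ω E σ s t) ∧
    (∀ F : Set (Tm σ), (∀ s ∈ F, ∀ t ∈ F, compat Ω E σ s t) →
      ∃ a : SemVal Ω E σ, ∀ s ∈ F, IsValue Ω E s a)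
  | .base 0 => by
    refine ⟨fun s t a hs ht => ?_, fun F hF => ?_⟩
    · cases a
      exacts [⟨fun h => hs h.1, fun h => ht h.2⟩, ⟨fun h => ht h.2, fun h => hs h.1⟩]
    · by_cases h : ∀ s ∈ F, Tm.Not (Ω.nf s) ∉ E
      · exact ⟨true, h⟩
      push Not at h
      obtain ⟨s₀, hs₀, hn₀⟩ := h
      exact ⟨false, fun s hs hmem => (hF s hs s₀ hs₀).1 ⟨hmem, hn₀⟩⟩
  | .base (_ + 1) => by
    refine ⟨fun s t a hs ht h => ?_, fun F hF => hE.exists_isValue_sort hF⟩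
    rcases h with h | h
    · exact hs.1.2.1 _ (hs.2 ⟨_, Or.inl h⟩) _ (ht.2 ⟨_, Or.inr h⟩) h
    · exact hs.1.2.1 _ (ht.2 ⟨_, Or.inl h⟩) _ (hs.2 ⟨_, Or.inr h⟩) h
  | .arr σ τ => by
    obtain ⟨hσ, hσ'⟩ := compat_of_isValue_and_exists_isValue σ
    obtain ⟨hτ, hτ'⟩ := compat_of_isValue_and_exists_isValue τ
    refine ⟨fun s t f hs ht u v huv => ?_, fun F hF => ?_⟩
    · obtain ⟨x, hx⟩ := hσ' {u, v} (by
        rintro _ (rfl | rfl) _ (rfl | rfl)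
        exacts [hE.compat_self _, huv, compat_symm huv, hE.compat_self _])
      exact hτ _ _ _ (hs u x (hx u (.inl rfl))) (ht v x (hx v (.inr rfl)))
    · choose g hg using fun x : RealizedVal Ω E σ =>
        hτ' {w | ∃ s ∈ F, ∃ t, IsValue Ω E t x.1 ∧ w = Tm.app s t} (by
          rintro _ ⟨s, hs, t, ht, rfl⟩ _ ⟨s', hs', t', ht', rfl⟩
          exact hF s hs s' hs' t t' (hσ t t' x.1 ht ht'))
      exact ⟨g, fun s hs t x hx => hg ⟨x, t, hx⟩ _ ⟨s, hs, t, hx, rfl⟩⟩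

lemma exists_isValue {σ : Ty} (s : Tm σ) : ∃ a : SemVal Ω E σ, IsValue Ω E s a :=
  let ⟨a, ha⟩ := (hE.compat_of_isValue_and_exists_isValue σ).2 {s} (by
    intro u hu v hv
    rw [Set.mem_singleton_iff.1 hu, Set.mem_singleton_iff.1 hv]
    exact hE.compat_self s)
  ⟨a, ha s rfl⟩

end Evident

end Values

section Constants

variable {Ω : NormOp} {E : Set (Tm Ty.o)}

namespace Evident

variable (hE : Evident Ω E)
include hE

lemma isValue_eq_of_Eqn : ∀ {σ : Ty} {s t : Tm σ} {a b : SemVal Ω E σ},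
    IsValue Ω E s a → IsValue Ω E t b → Tm.Eqn (Ω.nf s) (Ω.nf t) ∈ E → a = b
  | .base 0, _, _, a, b, hs, ht, he => by
    rcases hE.bq _ _ he with ⟨h1, h2⟩ | ⟨h1, h2⟩ <;> cases a <;> cases b <;>
      first | rfl | exact absurd h1 hs | exact absurd h2 ht
  | .base (α + 1), _, _, _, _, hs, ht, he => by
    by_cases hno : ∀ u v : Tm (Ty.sort α), Tm.Diseq u v ∉ E
    · rw [hs.1.eq_empty hno, ht.1.eq_empty hno]
    push Not at hno
    obtain ⟨u, v, huv⟩ := hno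
    obtain ⟨hds, hdt⟩ := hE.discriminating_of_Eqn he huv
    exact hE.isDiscriminant_eq_of_Eqn he hs.1 ht.1 (hs.2 hds) (ht.2 hdt)
  | .arr σ _, _, _, _, _, hs, ht, he => by
    funext ⟨x, u, hu⟩
    have hu' : IsValue Ω E (Ω.nf u) x := IsValue.of_nf_eq (Ω.n1 u).symm hu
    have he' := hE.fq _ _ he (Ω.nf u) (Ω.n1 u)
    rw [Ω.n2, Ω.n2] at he'
    exact isValue_eq_of_Eqn (hs _ x hu') (ht _ x hu') he'

lemma isValue_ne_of_Diseq : ∀ {σ : Ty} {s t : Tm σ} {a b : SemVal Ω E σ},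
    IsValue Ω E s a → IsValue Ω E t b → Tm.Diseq (Ω.nf s) (Ω.nf t) ∈ E → a ≠ b
  | .base 0, _, _, a, b, hs, ht, hd => by
    rcases hE.be _ _ hd with ⟨h1, h2⟩ | ⟨h1, h2⟩ <;> cases a <;> cases b <;>
      first | exact Bool.noConfusion | exact absurd h1 hs | exact absurd h2 ht
  | .base (_ + 1), _, _, _, _, hs, ht, hd => by
    rintro rfl
    exact hs.1.2.1 _ (hs.2 ⟨_, Or.inl hd⟩) _ (ht.2 ⟨_, Or.inr hd⟩) hd
  | .arr σ _, _, _, _, _, hs, ht, hd => by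
    rintro rfl
    obtain ⟨x, hx⟩ := hE.fe _ _ hd
    rw [Ω.n2, Ω.n2] at hx
    obtain ⟨ξ, hξ⟩ := hE.exists_isValue (Tm.var x σ)
    exact isValue_ne_of_Diseq (hs _ ξ hξ) (ht _ ξ hξ) hx rfl

end Evident

variable (Ω E) in
def negVal : SemVal Ω E (Ty.arr Ty.o Ty.o) := fun x => !x.1

open Classical in
variable (Ω E) in
noncomputable def eqVal (σ : Ty) : SemVal Ω E (Ty.arr σ (Ty.arr σ Ty.o)) :=
  fun x y => decide (x.1 = y.1)

lemma Evident.isValue_neg (hE : Evident Ω E) : IsValue Ω E Tm.neg (negVal Ω E) := by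
  intro t x hx
  cases x
  · show Tm.Not (Ω.nf (Tm.Not t)) ∉ E
    exact fun h => hx (hE.dn _ (Ω.nf_Not t ▸ h))
  · show Ω.nf (Tm.Not t) ∉ E
    rwa [Ω.nf_Not]

lemma Evident.isValue_eq (hE : Evident Ω E) (σ : Ty) : IsValue Ω E (Tm.eq σ) (eqVal Ω E σ) := by
  classical
  intro s x hx t y hy
  show IsValue Ω E (Tm.Eqn s t) (decide (x = y))
  by_cases hxy : x = y
  · simp only [hxy, decide_true]
    show Tm.Not (Ω.nf (Tm.Eqn s t)) ∉ E
    exact fun h => hE.isValue_ne_of_Diseq hx hy (by rwa [Ω.nf_Eqn] at h) hxy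
  · simp only [hxy, decide_false]
    show Ω.nf (Tm.Eqn s t) ∉ E
    exact fun h => hxy (hE.isValue_eq_of_Eqn hx hy (by rwa [Ω.nf_Eqn] at h))

end Constants

lemma updS_self (θ : ℕ → (σ : Ty) → Option (Tm σ)) (x : ℕ) (σ : Ty) (t : Tm σ) :
    updS θ x σ t x σ = some t :=
  dif_pos ⟨rfl, rfl⟩

lemma updS_of_not {θ : ℕ → (σ : Ty) → Option (Tm σ)} {x n : ℕ} {σ μ : Ty} (t : Tm σ)
    (h : ¬(n = x ∧ μ = σ)) : updS θ x σ t n μ = θ n μ :=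
  dif_neg h

lemma updD_self (M : Struc) (I : ℕ → ∀ σ, M.D σ) (x : ℕ) (σ : Ty) (a : M.D σ) :
    updD M I x σ a x σ = a :=
  dif_pos ⟨rfl, rfl⟩

lemma updD_of_not (M : Struc) {I : ℕ → ∀ σ, M.D σ} {x n : ℕ} {σ μ : Ty} (a : M.D σ)
    (h : ¬(n = x ∧ μ = σ)) : updD M I x σ a n μ = I n μ :=
  dif_neg h

section Model

variable {Ω : NormOp} {E : Set (Tm Ty.o)}

namespace Evident

variable (hE : Evident Ω E)
include hE

lemma exists_isValue_bool (b : Bool) : ∃ t : Tm Ty.o, IsValue Ω E t b := by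
  cases b
  · refine ⟨Tm.Diseq (Tm.var 0 Ty.o) (Tm.var 0 Ty.o), ?_⟩
    show Ω.nf (Tm.Diseq _ _) ∉ E
    rw [Ω.nf_Diseq, Ω.nf_var_o]
    exact hE.Diseq_self_notMem (Ω.nf_var_o 0)
  · refine ⟨Tm.Eqn (Tm.var 0 Ty.o) (Tm.var 0 Ty.o), ?_⟩
    show Tm.Not (Ω.nf (Tm.Eqn _ _)) ∉ E
    rw [Ω.nf_Eqn, Ω.nf_var_o]
    exact hE.Diseq_self_notMem (Ω.nf_var_o 0)

noncomputable def assignment (σ : Ty) (n : ℕ) : RealizedVal Ω E σ :=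
  ⟨(hE.exists_isValue (Tm.var n σ)).choose, _, (hE.exists_isValue (Tm.var n σ)).choose_spec⟩

noncomputable def struc : Struc where
  D := RealizedVal Ω E
  ap f a := ⟨f.1 ⟨a.1, a.2⟩, by
    obtain ⟨s, hs⟩ := f.2
    obtain ⟨t, ht⟩ := a.2
    exact ⟨Tm.app s t, hs t a.1 ht⟩⟩
  ext f g h := Subtype.ext (funext fun x => congrArg Subtype.val (h x))
  ne σ := ⟨hE.assignment σ 0⟩
  I n σ := hE.assignment σ n
  bo :=
    { toFun := fun a => a.1
      invFun := fun b => ⟨b, hE.exists_isValue_bool b⟩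
      left_inv := fun _ => rfl
      right_inv := fun _ => rfl }
  negv := ⟨negVal Ω E, Tm.neg, hE.isValue_neg⟩
  eqv σ := ⟨eqVal Ω E σ, Tm.eq σ, hE.isValue_eq σ⟩
  hneg _ := rfl
  heq a b := by
    classical
    refine Subtype.ext_iff.trans ?_
    show decide (a.1 = b.1) = true ↔ a = b
    rw [decide_eq_true_iff, Subtype.ext_iff]

end Evident

variable (Ω E) in
def Realizes (I : ℕ → ∀ σ, RealizedVal Ω E σ) (θ : ℕ → (σ : Ty) → Option (Tm σ)) : Prop :=
  ∀ n σ, IsValue Ω E ((θ n σ).getD (Tm.var n σ)) (I n σ).1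

noncomputable def realizer (I : ℕ → ∀ σ, RealizedVal Ω E σ) : ℕ → (σ : Ty) → Option (Tm σ) :=
  fun n σ => some (I n σ).2.choose

lemma realizes_realizer (I : ℕ → ∀ σ, RealizedVal Ω E σ) : Realizes Ω E I (realizer I) :=
  fun n σ => (I n σ).2.choose_spec

namespace Evident

variable (hE : Evident Ω E)

/-- Adequacy is carried through the recursion: applying a functional value needs a realized
argument. -/
noncomputable def value : ∀ {σ : Ty} (s : Tm σ) (I : ℕ → ∀ σ, RealizedVal Ω E σ),
    {a : SemVal Ω E σ // ∀ θ, Realizes Ω E I θ → IsValue Ω E (Ω.sub θ s) a}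
  | _, .var n σ, I => ⟨(I n σ).1, fun θ hθ => by rw [Ω.s1]; exact hθ n σ⟩
  | _, .neg, _ => ⟨negVal Ω E, fun θ _ => by rw [Ω.s1neg]; exact hE.isValue_neg⟩
  | _, .eq σ, _ => ⟨eqVal Ω E σ, fun θ _ => by rw [Ω.s1eq]; exact hE.isValue_eq σ⟩
  | _, .app f u, I => ⟨(value f I).1 ⟨(value u I).1, _, (value u I).2 _ (realizes_realizer I)⟩,
      fun θ hθ => by
        rw [Ω.s2]
        exact (value f I).2 θ hθ _ _ ((value u I).2 θ hθ)⟩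
  | _, .lam x σ b, I => ⟨fun a => (value b (updD hE.struc I x σ a)).1, fun θ hθ t y hy => by
      refine IsValue.of_nf_eq (Ω.s3 θ x σ b t).symm ((value b _).2 (updS θ x σ t) fun n μ => ?_)
      by_cases hc : n = x ∧ μ = σ
      · obtain ⟨rfl, rfl⟩ := hc
        rw [updS_self]; erw [updD_self]
        exact hy
      · rw [updS_of_not t hc]; erw [updD_of_not _ _ hc]
        exact hθ n μ⟩

noncomputable def eval {σ : Ty} (s : Tm σ) (I : ℕ → ∀ σ, RealizedVal Ω E σ) : RealizedVal Ω E σ :=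
  ⟨(hE.value s I).1, _, (hE.value s I).2 _ (realizes_realizer I)⟩

lemma eval_spec : ∀ {σ : Ty} (s : Tm σ) (I : ℕ → ∀ σ, RealizedVal Ω E σ),
    Eval hE.struc I σ s (hE.eval s I)
  | _, .var n σ, I => Eval.var (M := hE.struc) I n σ
  | _, .neg, I => Eval.neg (M := hE.struc) I
  | _, .eq σ, I => Eval.eq (M := hE.struc) I σ
  | _, .app f u, I => Eval.app (eval_spec f I) (eval_spec u I)
  | _, .lam x σ b, I => Eval.lam x σ b _ fun a => eval_spec b (updD hE.struc I x σ a)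

noncomputable def interp : Interp where
  toStruc := hE.struc
  total _ s := ⟨_, hE.eval_spec s _⟩

include hE in
theorem exists_model (hN : ∀ s ∈ E, Ω.nf s = s) : ∃ M : Interp, Satisfies M E := by
  refine ⟨hE.interp, fun s hs => ?_⟩
  have hval : IsValue Ω E s (hE.value s hE.struc.I).1 := IsValue.of_nf_eq (Ω.s4 s)
    ((hE.value s _).2 _ fun n σ => (hE.exists_isValue (Tm.var n σ)).choose_spec)
  have htrue : (hE.value s hE.struc.I).1 = true := by
    revert hval
    cases (hE.value s hE.struc.I).1
    · exact fun hval => absurd ((hN s hs).symm ▸ hs) hval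
    · exact fun _ => rfl
  have heval : hE.eval s hE.struc.I = hE.interp.bo.symm true := Subtype.ext htrue
  exact heval ▸ hE.eval_spec s hE.struc.I

end Evident

end Model

/-- Completeness: the set of finite non-refutable branches is an abstract
consistency class, and consequently every unsatisfiable finite branch is refutable. -/
theorem stmt15 (Ω : NormOp) :
    ACC Ω {A : Set (Tm Ty.o) | A.Finite ∧ (∀ s ∈ A, Ω.nf s = s) ∧ ¬ Refutable Ω A} ∧
    (∀ A : Set (Tm Ty.o), A.Finite → (∀ s ∈ A, Ω.nf s = s) →
      ¬ (∃ M : Interp, Satisfies M A) → Refutable Ω A) := by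
  refine ⟨nonRefutableBranches.acc Ω, fun A hfin hnorm hunsat => ?_⟩
  by_contra href
  obtain ⟨E, hAE, hE, hEΓ⟩ :=
    (nonRefutableBranches.acc Ω).exists_evident_superset ⟨hfin, hnorm, href⟩
  obtain ⟨M, hM⟩ := hE.exists_model fun s hs =>
    let ⟨_, hB, hsB⟩ := hEΓ s hs
    hB.2.1 s hsB
  exact hunsat ⟨M, fun s hs => hM s (hAE hs)⟩
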